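/- arXiv:math/0306032 — 4 statements merged into one kernel-verified Lean document; each statement's English description precedes it below -/
import Mathlib

section
/- Suppose operators A(u), B(u) (depending polynomially on a parameter u) satisfy the exchange relation (u−v) A(u) B(v) = (u q^{−1} − v q) B(v) A(u) + v(q − q^{−1}) B(u) A(v), that [B(u), B(v)] = 0, and that A(u) w = 𝒜(u) w for a vector w and a scalar function 𝒜. Then for distinct t_1,…,t_k, A(u) B(t_1)⋯B(t_k) w = 𝒜(u) ∏_{a=1}^{k} (u q^{−1} − t_a q)/(u − t_a) · B(t_1)⋯B(t_k) w + (q − q^{−1}) ∑_{a=1}^{k} t_a/(u − t_a) · 𝒜(t_a) ∏_{b≠a} (t_a q^{−1} − t_b q)/(t_a − t_b) · B(u) ∏_{b≠a} B(t_b) w. -/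
open Finset

lemma erase_prod_ite {n : ℕ} (a : Fin n) (h : Fin n → ℂ) :
    ∏ b ∈ univ.erase a, h b = ∏ b, if b = a then 1 else h b := by
  rw [← Finset.prod_erase (f := fun b => if b = a then 1 else h b) univ (if_pos rfl)]
  exact Finset.prod_congr rfl fun b hb => by rw [if_neg (Finset.ne_of_mem_erase hb)]

lemma prod_erase_zero' (k:ℕ) (h : Fin (k+1) → ℂ) :
    ∏ b ∈ (univ.erase (0: Fin (k+1))), h b = ∏ i : Fin k, h i.succ := by
  rw [erase_prod_ite, Fin.prod_univ_succ]
  simp [Fin.succ_ne_zero]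

lemma prod_erase_succ' (k:ℕ) (i : Fin k) (h : Fin (k+1) → ℂ) :
    ∏ b ∈ univ.erase i.succ, h b = h 0 * ∏ j ∈ univ.erase i, h j.succ := by
  rw [erase_prod_ite, Fin.prod_univ_succ, erase_prod_ite]
  simp [(Fin.succ_ne_zero i).symm, Fin.succ_inj]

theorem A_action_on_Bethe_vector (V : Type*) [AddCommGroup V] [Module ℂ V]
    (q : ℂ) (hq2 : q ^ 2 ≠ 1)
    (A B : ℂ → Module.End ℂ V) (w : V) (𝒜 : ℂ → ℂ)
    (hBB : ∀ u v : ℂ, B u * B v = B v * B u)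
    (hAB : ∀ u v : ℂ, (u - v) • (A u * B v)
        = (u * q⁻¹ - v * q) • (B v * A u) + (v * (q - q⁻¹)) • (B u * A v))
    (hAw : ∀ u : ℂ, A u w = 𝒜 u • w)
    (k : ℕ) (t : Fin k → ℂ) (u : ℂ)
    (ht : Function.Injective t) (hu : ∀ a, u ≠ t a) :
    A u ((List.ofFn fun a => B (t a)).prod w)
      = (𝒜 u * ∏ a, (u * q⁻¹ - t a * q) / (u - t a)) •
          (List.ofFn fun a => B (t a)).prod w
        + ∑ a, ((q - q⁻¹) * (t a / (u - t a)) * 𝒜 (t a)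
            * ∏ b ∈ univ.erase a, (t a * q⁻¹ - t b * q) / (t a - t b))
          • (B u) (((List.ofFn fun b => B (t b)).eraseIdx (a : ℕ)).prod w) := by
  have hBBv : ∀ a b : ℂ, ∀ x : V, B a (B b x) = B b (B a x) := by
    intro a b x
    have h := congrArg (fun T : Module.End ℂ V => T x) (hBB a b)
    simpa using h
  have hABv : ∀ a b : ℂ, a ≠ b → ∀ x : V, A a (B b x)
      = ((a * q⁻¹ - b * q) / (a - b)) • B b (A a x)
        + ((b * (q - q⁻¹)) / (a - b)) • B a (A b x) := by
    intro a b hab x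
    have hab' : a - b ≠ 0 := sub_ne_zero.mpr hab
    have h := congrArg (fun T : Module.End ℂ V => T x) (hAB a b)
    simp only [LinearMap.smul_apply, LinearMap.add_apply, Module.End.mul_apply] at h
    rw [div_eq_inv_mul, div_eq_inv_mul, ← smul_smul, ← smul_smul, ← smul_add, ← h,
      smul_smul, inv_mul_cancel₀ hab', one_smul]
  induction k generalizing u with
  | zero => simp [hAw]
  | succ k ih =>
    have hs : Function.Injective (fun i : Fin k => t i.succ) :=
      fun i j hij => Fin.succ_injective _ (ht hij)
    have hus : ∀ a : Fin k, u ≠ t a.succ := fun a => hu a.succ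
    have hut0 : u ≠ t 0 := hu 0
    have ht0s : ∀ a : Fin k, t 0 ≠ t a.succ := fun a h => (Fin.succ_ne_zero a) (ht h).symm
    rw [List.ofFn_succ, List.prod_cons, Module.End.mul_apply, hABv u (t 0) hut0]
    rw [ih _ u hs hus, ih _ (t 0) hs ht0s]
    simp only [map_add, map_smul, map_sum, Fin.sum_univ_succ, Fin.prod_univ_succ,
      prod_erase_zero', prod_erase_succ', Fin.val_zero, Fin.val_succ,
      List.eraseIdx_cons_zero, List.eraseIdx_cons_succ, List.prod_cons,
      Module.End.mul_apply, smul_add, smul_smul, Finset.smul_sum]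
    simp only [hBBv (t 0) u]
    have hsub0 : u - t 0 ≠ 0 := sub_ne_zero.mpr hut0
    have e1 : (u * q⁻¹ - t 0 * q) / (u - t 0) *
          (𝒜 u * ∏ a : Fin k, (u * q⁻¹ - t a.succ * q) / (u - t a.succ))
        = 𝒜 u * ((u * q⁻¹ - t 0 * q) / (u - t 0) *
            ∏ a : Fin k, (u * q⁻¹ - t a.succ * q) / (u - t a.succ)) := by ring
    have e2 : t 0 * (q - q⁻¹) / (u - t 0) *
          (𝒜 (t 0) * ∏ a : Fin k, (t 0 * q⁻¹ - t a.succ * q) / (t 0 - t a.succ))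
        = (q - q⁻¹) * (t 0 / (u - t 0)) * 𝒜 (t 0) *
            ∏ a : Fin k, (t 0 * q⁻¹ - t a.succ * q) / (t 0 - t a.succ) := by ring
    have e3 : ∀ x : Fin k,
        (u * q⁻¹ - t 0 * q) / (u - t 0) *
            ((q - q⁻¹) * (t x.succ / (u - t x.succ)) * 𝒜 (t x.succ) *
              ∏ b ∈ Finset.univ.erase x, (t x.succ * q⁻¹ - t b.succ * q) / (t x.succ - t b.succ))
          + t 0 * (q - q⁻¹) / (u - t 0) *
            ((q - q⁻¹) * (t x.succ / (t 0 - t x.succ)) * 𝒜 (t x.succ) *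
              ∏ b ∈ Finset.univ.erase x, (t x.succ * q⁻¹ - t b.succ * q) / (t x.succ - t b.succ))
        = (q - q⁻¹) * (t x.succ / (u - t x.succ)) * 𝒜 (t x.succ) *
            ((t x.succ * q⁻¹ - t 0 * q) / (t x.succ - t 0) *
              ∏ j ∈ Finset.univ.erase x, (t x.succ * q⁻¹ - t j.succ * q) / (t x.succ - t j.succ)) := by
      intro x
      have h1 : u - t x.succ ≠ 0 := sub_ne_zero.mpr (hus x)
      have h2 : t 0 - t x.succ ≠ 0 := sub_ne_zero.mpr (ht0s x)
      have h3 : t x.succ - t 0 ≠ 0 := sub_ne_zero.mpr fun h => (ht0s x) h.symm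
      generalize (∏ b ∈ Finset.univ.erase x,
        (t x.succ * q⁻¹ - t b.succ * q) / (t x.succ - t b.succ)) = P
      generalize hta : t x.succ = ta at *
      generalize ht0 : t 0 = t0 at *
      generalize hqi : q⁻¹ = r at *
      field_simp
      ring
    have hS : (∑ x : Fin k,
          ((u * q⁻¹ - t 0 * q) / (u - t 0) *
              ((q - q⁻¹) * (t x.succ / (u - t x.succ)) * 𝒜 (t x.succ) *
                ∏ b ∈ Finset.univ.erase x, (t x.succ * q⁻¹ - t b.succ * q) / (t x.succ - t b.succ))) •
            (B u) ((B (t 0)) (((List.ofFn fun a => B (t a.succ)).eraseIdx (x : ℕ)).prod w)))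
        + ∑ x : Fin k,
          (t 0 * (q - q⁻¹) / (u - t 0) *
              ((q - q⁻¹) * (t x.succ / (t 0 - t x.succ)) * 𝒜 (t x.succ) *
                ∏ b ∈ Finset.univ.erase x, (t x.succ * q⁻¹ - t b.succ * q) / (t x.succ - t b.succ))) •
            (B u) ((B (t 0)) (((List.ofFn fun a => B (t a.succ)).eraseIdx (x : ℕ)).prod w))
        = ∑ x : Fin k,
          ((q - q⁻¹) * (t x.succ / (u - t x.succ)) * 𝒜 (t x.succ) *
              ((t x.succ * q⁻¹ - t 0 * q) / (t x.succ - t 0) *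
                ∏ j ∈ Finset.univ.erase x, (t x.succ * q⁻¹ - t j.succ * q) / (t x.succ - t j.succ))) •
            (B u) ((B (t 0)) (((List.ofFn fun a => B (t a.succ)).eraseIdx (x : ℕ)).prod w)) := by
      rw [← Finset.sum_add_distrib]
      exact Finset.sum_congr rfl fun x _ => by rw [← add_smul, e3 x]
    rw [e1, e2, ← hS]
    abel
end

section
/- Suppose operators D(u), B(u) satisfy (u−v) D(u) B(v) = (u q − v q^{−1}) B(v) D(u) − v(q − q^{−1}) B(u) D(v), that [B(u), B(v)] = 0, and that D(u) w = 𝒟(u) w for a vector w. Then for distinct t_1,…,t_k, D(u) B(t_1)⋯B(t_k) w = 𝒟(u) ∏_{a=1}^{k} (u q − t_a q^{−1})/(u − t_a) · B(t_1)⋯B(t_k) w − (q − q^{−1}) ∑_{a=1}^{k} t_a/(u − t_a) · 𝒟(t_a) ∏_{b≠a} (t_a q − t_b q^{−1})/(t_a − t_b) · B(u) ∏_{b≠a} B(t_b) w. -/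
open Finset

private lemma erase_zero_eq (n : ℕ) :
    (univ : Finset (Fin (n+1))).erase 0 = univ.image Fin.succ := by
  ext b
  refine Fin.cases ?_ ?_ b <;> simp [Fin.succ_ne_zero, eq_comm]

private lemma erase_succ_eq (n : ℕ) (j : Fin n) :
    (univ : Finset (Fin (n+1))).erase j.succ
      = insert 0 ((univ.erase j).image Fin.succ) := by
  ext b
  refine Fin.cases ?_ ?_ b <;>
    simp [Fin.succ_ne_zero, (Fin.succ_ne_zero _).symm, Fin.succ_inj, eq_comm, Ne]

private lemma prod_erase_zero {M : Type*} [CommMonoid M] (n : ℕ) (f : Fin (n+1) → M) :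
    ∏ b ∈ univ.erase 0, f b = ∏ b : Fin n, f b.succ := by
  rw [erase_zero_eq, Finset.prod_image (fun a _ b _ h => Fin.succ_injective _ h)]

private lemma prod_erase_succ {M : Type*} [CommMonoid M] (n : ℕ) (j : Fin n) (f : Fin (n+1) → M) :
    ∏ b ∈ univ.erase j.succ, f b = f 0 * ∏ b ∈ univ.erase j, f b.succ := by
  rw [erase_succ_eq, Finset.prod_insert (by simp [Fin.succ_ne_zero, eq_comm]),
    Finset.prod_image (fun a _ b _ h => Fin.succ_injective _ h)]

private lemma key_id (q r u t0 ta : ℂ) (h1 : u ≠ t0) (h2 : u ≠ ta) (h3 : t0 ≠ ta) :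
    (q - r) * (ta / (u - ta)) * ((ta * q - t0 * r) / (ta - t0))
      = ((u * q - t0 * r) / (u - t0)) * ((q - r) * (ta / (u - ta)))
        - (t0 * (q - r) / (u - t0)) * ((q - r) * (ta / (t0 - ta))) := by
  have h1' : u - t0 ≠ 0 := sub_ne_zero.mpr h1
  have h2' : u - ta ≠ 0 := sub_ne_zero.mpr h2
  have h3' : t0 - ta ≠ 0 := sub_ne_zero.mpr h3
  have h3'' : ta - t0 ≠ 0 := sub_ne_zero.mpr (Ne.symm h3)
  field_simp
  ring

theorem D_action_on_Bethe_vector (V : Type*) [AddCommGroup V] [Module ℂ V]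
    (q : ℂ) (hq2 : q ^ 2 ≠ 1)
    (D B : ℂ → Module.End ℂ V) (w : V) (𝒟 : ℂ → ℂ)
    (hBB : ∀ u v : ℂ, B u * B v = B v * B u)
    (hDB : ∀ u v : ℂ, (u - v) • (D u * B v)
        = (u * q - v * q⁻¹) • (B v * D u) - (v * (q - q⁻¹)) • (B u * D v))
    (hDw : ∀ u : ℂ, D u w = 𝒟 u • w)
    (k : ℕ) (t : Fin k → ℂ) (u : ℂ)
    (ht : Function.Injective t) (hu : ∀ a, u ≠ t a) :
    D u ((List.ofFn fun a => B (t a)).prod w)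
      = (𝒟 u * ∏ a, (u * q - t a * q⁻¹) / (u - t a)) •
          (List.ofFn fun a => B (t a)).prod w
        - ∑ a, ((q - q⁻¹) * (t a / (u - t a)) * 𝒟 (t a)
            * ∏ b ∈ univ.erase a, (t a * q - t b * q⁻¹) / (t a - t b))
          • (B u) (((List.ofFn fun b => B (t b)).eraseIdx (a : ℕ)).prod w) := by
  induction k generalizing u with
  | zero => simp [hDw]
  | succ n ih =>
    set t' : Fin n → ℂ := fun a => t a.succ with ht'def
    have ht' : Function.Injective t' := fun a b h => Fin.succ_injective _ (ht h)
    have hu' : ∀ a, u ≠ t' a := fun a => hu a.succ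
    have ht0 : ∀ a, t 0 ≠ t' a := fun a h => Fin.succ_ne_zero a (ht h).symm
    have hne : u - t 0 ≠ 0 := sub_ne_zero.mpr (hu 0)
    have hrel : D u * B (t 0)
        = ((u * q - t 0 * q⁻¹) / (u - t 0)) • (B (t 0) * D u)
          - ((t 0 * (q - q⁻¹)) / (u - t 0)) • (B u * D (t 0)) := by
      rw [div_eq_inv_mul, div_eq_inv_mul, ← smul_smul, ← smul_smul, ← smul_sub,
        ← hDB u (t 0), smul_smul, inv_mul_cancel₀ hne, one_smul]
    have hL : (List.ofFn fun a : Fin (n+1) => B (t a))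
        = B (t 0) :: (List.ofFn fun a : Fin n => B (t' a)) := by
      rw [List.ofFn_succ]
    rw [hL, List.prod_cons, Module.End.mul_apply, ← Module.End.mul_apply (D u), hrel]
    rw [LinearMap.sub_apply, LinearMap.smul_apply, LinearMap.smul_apply,
      Module.End.mul_apply, Module.End.mul_apply,
      ih t' u ht' hu', ih t' (t 0) ht' ht0]
    have hcomm : ∀ y, B (t 0) (B u y) = B u (B (t 0) y) := fun y => by
      rw [← Module.End.mul_apply, ← Module.End.mul_apply, hBB]
    simp only [map_sub, map_smul, map_sum, Fin.prod_univ_succ, Fin.sum_univ_succ,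
      Fin.val_succ, Fin.val_zero, List.eraseIdx_cons_succ, List.eraseIdx_cons_zero,
      prod_erase_zero, prod_erase_succ, List.prod_cons, Module.End.mul_apply,
      hcomm, smul_sub, smul_smul, Finset.smul_sum]
    have htt : ∀ x : Fin n, t x.succ = t' x := fun _ => rfl
    simp only [htt]
    have hsum : (∑ x : Fin n,
          ((q - q⁻¹) * (t' x / (u - t' x)) * 𝒟 (t' x) *
              ((t' x * q - t 0 * q⁻¹) / (t' x - t 0) *
                ∏ b ∈ univ.erase x, (t' x * q - t' b * q⁻¹) / (t' x - t' b))) •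
            (B u) ((B (t 0)) (((List.ofFn fun a => B (t' a)).eraseIdx (x : ℕ)).prod w)))
        = (∑ x : Fin n,
            ((u * q - t 0 * q⁻¹) / (u - t 0) *
                ((q - q⁻¹) * (t' x / (u - t' x)) * 𝒟 (t' x) *
                  ∏ b ∈ univ.erase x, (t' x * q - t' b * q⁻¹) / (t' x - t' b))) •
              (B u) ((B (t 0)) (((List.ofFn fun a => B (t' a)).eraseIdx (x : ℕ)).prod w)))
          - ∑ x : Fin n,
            (t 0 * (q - q⁻¹) / (u - t 0) *
                ((q - q⁻¹) * (t' x / (t 0 - t' x)) * 𝒟 (t' x) *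
                  ∏ b ∈ univ.erase x, (t' x * q - t' b * q⁻¹) / (t' x - t' b))) •
              (B u) ((B (t 0)) (((List.ofFn fun a => B (t' a)).eraseIdx (x : ℕ)).prod w)) := by
      rw [← Finset.sum_sub_distrib]
      refine Finset.sum_congr rfl fun x _ => ?_
      rw [← sub_smul]
      congr 1
      have hk := key_id q q⁻¹ u (t 0) (t' x) (hu 0) (hu' x) (ht0 x)
      linear_combination (𝒟 (t' x) * ∏ b ∈ univ.erase x, (t' x * q - t' b * q⁻¹) / (t' x - t' b)) * hk
    rw [hsum]
    module
end

section
/- Under the hypotheses of the two preceding action formulas, if t_1,…,t_k are pairwise distinct, nonzero, and satisfy the Bethe ansatz equations 𝒜(t_a) ∏_{b≠a} (t_a − t_b q²) = κ 𝒟(t_a) ∏_{b≠a} (t_a q² − t_b) for a = 1,…,k, then the vector B(t_1)⋯B(t_k) w is an eigenvector of T(u) = A(u) + κ D(u) with eigenvalue 𝒜(u) ∏_{a=1}^{k} (u q^{−1} − t_a q)/(u − t_a) + κ 𝒟(u) ∏_{a=1}^{k} (u q − t_a q^{−1})/(u − t_a), for every u ∉ {t_1,…,t_k}. -/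
open Finset

section Aux
variable {V : Type*} [AddCommGroup V] [Module ℂ V]

private lemma core_id (p p' u v τ : ℂ) (h1 : u ≠ v) (h2 : u ≠ τ) (h3 : v ≠ τ) :
    (u * p - v * p') / (u - v) * (τ * (p' - p) / (u - τ))
      + v * (p' - p) / (u - v) * (τ * (p' - p) / (v - τ))
      = τ * (p' - p) / (u - τ) * ((τ * p - v * p') / (τ - v)) := by
  have h1' : u - v ≠ 0 := sub_ne_zero.mpr h1
  have h2' : u - τ ≠ 0 := sub_ne_zero.mpr h2
  have h3' : v - τ ≠ 0 := sub_ne_zero.mpr h3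
  have h4' : τ - v ≠ 0 := sub_ne_zero.mpr (Ne.symm h3)
  field_simp
  ring

private lemma step_lemma (B X : ℂ → Module.End ℂ V) (p p' : ℂ)
    (hXB : ∀ u v : ℂ, (u - v) • (X u * B v)
        = (u * p - v * p') • (B v * X u) + (v * (p' - p)) • (B u * X v))
    (u v : ℂ) (huv : u ≠ v) (x : V) :
    X u ((B v) x) = ((u * p - v * p') / (u - v)) • (B v) ((X u) x)
      + ((v * (p' - p)) / (u - v)) • (B u) ((X v) x) := by
  have h := DFunLike.congr_fun (hXB u v) x
  simp only [LinearMap.smul_apply, Module.End.mul_apply, LinearMap.add_apply] at h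
  have hne : u - v ≠ 0 := sub_ne_zero.mpr huv
  calc X u ((B v) x) = (u - v)⁻¹ • ((u - v) • X u ((B v) x)) := (inv_smul_smul₀ hne _).symm
    _ = _ := by
        rw [h, smul_add, smul_smul, smul_smul, div_eq_inv_mul, div_eq_inv_mul]

private lemma key_lemma (B X : ℂ → Module.End ℂ V) (p p' : ℂ) (w : V) (𝒳 : ℂ → ℂ)
    (hBB : ∀ u v : ℂ, B u * B v = B v * B u)
    (hXB : ∀ u v : ℂ, (u - v) • (X u * B v)
        = (u * p - v * p') • (B v * X u) + (v * (p' - p)) • (B u * X v))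
    (hXw : ∀ u : ℂ, X u w = 𝒳 u • w)
    {k : ℕ} (t : Fin k → ℂ) (ht : Function.Injective t) (s : Finset (Fin k)) :
    ∀ u : ℂ, (∀ a ∈ s, u ≠ t a) →
      X u (s.noncommProd (fun a => B (t a)) (fun x _ y _ _ => hBB (t x) (t y)) w)
        = (∏ a ∈ s, (u * p - t a * p') / (u - t a)) •
            𝒳 u • (s.noncommProd (fun a => B (t a)) (fun x _ y _ _ => hBB (t x) (t y)) w)
          + ∑ a ∈ s, ((t a * (p' - p)) / (u - t a) * 𝒳 (t a)
              * ∏ b ∈ s.erase a, (t a * p - t b * p') / (t a - t b)) •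
              (B u) ((s.erase a).noncommProd (fun b => B (t b))
                (fun x _ y _ _ => hBB (t x) (t y)) w) := by
  induction s using Finset.induction_on with
  | empty => intro u hu; rw [Finset.noncommProd_empty _ (fun x _ y _ _ => hBB (t x) (t y))]; simp [hXw]
  | @insert a₀ s' ha₀ ih =>
    intro u hu
    have hu₀ : u ≠ t a₀ := hu a₀ (mem_insert_self _ _)
    have hus : ∀ a ∈ s', u ≠ t a := fun a ha => hu a (mem_insert_of_mem ha)
    have h0s : ∀ a ∈ s', t a₀ ≠ t a := fun a ha hEq => ha₀ (by rw [ht hEq]; exact ha)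
    have hswap : ∀ (v v' : ℂ) (x : V), (B v) ((B v') x) = (B v') ((B v) x) := fun v v' x => by
      rw [← Module.End.mul_apply, hBB, Module.End.mul_apply]
    rw [Finset.noncommProd_insert_of_notMem _ _ _ (fun x _ y _ _ => hBB (t x) (t y)) ha₀, Module.End.mul_apply,
      step_lemma B X p p' hXB u (t a₀) hu₀, ih u hus, ih (t a₀) h0s,
      Finset.prod_insert ha₀, Finset.sum_insert ha₀, Finset.erase_insert ha₀]
    simp only [map_add, map_smul, map_sum, smul_add, smul_smul, Finset.smul_sum,
      Module.End.mul_apply]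
    simp only [hswap (t a₀) u]
    have hpt : ∀ a ∈ s',
        (t a * (p' - p) / (u - t a) * 𝒳 (t a)
            * ∏ b ∈ (insert a₀ s').erase a, (t a * p - t b * p') / (t a - t b)) •
          (B u) ((((insert a₀ s').erase a).noncommProd (fun b => B (t b))
            (fun x _ y _ _ => hBB (t x) (t y))) w)
        = ((u * p - t a₀ * p') / (u - t a₀) *
            (t a * (p' - p) / (u - t a) * 𝒳 (t a)
              * ∏ b ∈ s'.erase a, (t a * p - t b * p') / (t a - t b))) •
            (B u) ((B (t a₀)) (((s'.erase a).noncommProd (fun b => B (t b))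
              (fun x _ y _ _ => hBB (t x) (t y))) w))
          + (t a₀ * (p' - p) / (u - t a₀) *
            (t a * (p' - p) / (t a₀ - t a) * 𝒳 (t a)
              * ∏ b ∈ s'.erase a, (t a * p - t b * p') / (t a - t b))) •
            (B u) ((B (t a₀)) (((s'.erase a).noncommProd (fun b => B (t b))
              (fun x _ y _ _ => hBB (t x) (t y))) w)) := by
      intro a ha
      have hne : a₀ ∉ s'.erase a := fun h => ha₀ (Finset.mem_of_mem_erase h)
      rw [Finset.erase_insert_of_ne (ne_of_mem_of_not_mem ha ha₀).symm, Finset.prod_insert hne,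
        Finset.noncommProd_insert_of_notMem _ _ _ (fun x _ y _ _ => hBB (t x) (t y)) hne, Module.End.mul_apply, ← add_smul]
      congr 1
      linear_combination (-(𝒳 (t a) * ∏ b ∈ s'.erase a, (t a * p - t b * p') / (t a - t b))) *
        core_id p p' u (t a₀) (t a) hu₀ (hus a ha) (h0s a ha)
    rw [Finset.sum_congr rfl hpt, Finset.sum_add_distrib]
    module
end Aux

theorem Bethe_eigenvector (V : Type*) [AddCommGroup V] [Module ℂ V]
    (q κ : ℂ) (hq2 : q ^ 2 ≠ 1)
    (A B D : ℂ → Module.End ℂ V) (w : V) (𝒜 𝒟 : ℂ → ℂ)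
    (hBB : ∀ u v : ℂ, B u * B v = B v * B u)
    (hAB : ∀ u v : ℂ, (u - v) • (A u * B v)
        = (u * q⁻¹ - v * q) • (B v * A u) + (v * (q - q⁻¹)) • (B u * A v))
    (hDB : ∀ u v : ℂ, (u - v) • (D u * B v)
        = (u * q - v * q⁻¹) • (B v * D u) - (v * (q - q⁻¹)) • (B u * D v))
    (hAw : ∀ u : ℂ, A u w = 𝒜 u • w)
    (hDw : ∀ u : ℂ, D u w = 𝒟 u • w)
    (k : ℕ) (t : Fin k → ℂ)
    (ht : Function.Injective t) (ht0 : ∀ a, t a ≠ 0)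
    (hBethe : ∀ a, 𝒜 (t a) * ∏ b ∈ univ.erase a, (t a - t b * q ^ 2)
        = κ * 𝒟 (t a) * ∏ b ∈ univ.erase a, (t a * q ^ 2 - t b)) :
    ∀ u : ℂ, (∀ a, u ≠ t a) →
      (A u + κ • D u) ((List.ofFn fun a => B (t a)).prod w)
        = (𝒜 u * ∏ a, (u * q⁻¹ - t a * q) / (u - t a)
            + κ * 𝒟 u * ∏ a, (u * q - t a * q⁻¹) / (u - t a))
          • (List.ofFn fun a => B (t a)).prod w := by
  intro u hu
  have hAB' : ∀ u v : ℂ, (u - v) • (A u * B v)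
      = (u * q⁻¹ - v * q) • (B v * A u) + (v * (q - q⁻¹)) • (B u * A v) := hAB
  have hDB' : ∀ u v : ℂ, (u - v) • (D u * B v)
      = (u * q - v * q⁻¹) • (B v * D u) + (v * (q⁻¹ - q)) • (B u * D v) := by
    intro u v
    rw [hDB u v, show (v * (q⁻¹ - q)) = -(v * (q - q⁻¹)) by ring, neg_smul, ← sub_eq_add_neg]
  have hofn : (List.ofFn fun a => B (t a)).prod
      = Finset.univ.noncommProd (fun a => B (t a)) (fun x _ y _ _ => hBB (t x) (t y)) := by
    rw [List.ofFn_eq_map]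
    exact (Multiset.noncommProd_coe _ _).symm
  rw [hofn]
  have hA := key_lemma B A q⁻¹ q w 𝒜 hBB hAB' hAw t ht Finset.univ u (fun a _ => hu a)
  have hD := key_lemma B D q q⁻¹ w 𝒟 hBB hDB' hDw t ht Finset.univ u (fun a _ => hu a)
  simp only [LinearMap.add_apply, LinearMap.smul_apply, hA, hD, smul_add, Finset.smul_sum,
    smul_smul]
  -- cancellation of unwanted terms
  have hq2q : ∀ x y : ℂ, (x * q⁻¹ - y * q) = q⁻¹ * (x - y * q ^ 2) := by
    intro x y
    rcases eq_or_ne q 0 with h | h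
    · simp [h]
    · field_simp
  have hq2q' : ∀ x y : ℂ, (x * q - y * q⁻¹) = q⁻¹ * (x * q ^ 2 - y) := by
    intro x y
    rcases eq_or_ne q 0 with h | h
    · simp [h]
    · field_simp
  have hz : ∀ a : Fin k,
      (t a * (q - q⁻¹) / (u - t a) * 𝒜 (t a)
          * ∏ b ∈ univ.erase a, (t a * q⁻¹ - t b * q) / (t a - t b))
        + κ * (t a * (q⁻¹ - q) / (u - t a) * 𝒟 (t a)
          * ∏ b ∈ univ.erase a, (t a * q - t b * q⁻¹) / (t a - t b)) = 0 := by
    intro a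
    have e1 : ∏ b ∈ univ.erase a, (t a * q⁻¹ - t b * q) / (t a - t b)
        = q⁻¹ ^ (univ.erase a).card *
            ((∏ b ∈ univ.erase a, (t a - t b * q ^ 2)) / ∏ b ∈ univ.erase a, (t a - t b)) := by
      calc ∏ b ∈ univ.erase a, (t a * q⁻¹ - t b * q) / (t a - t b)
          = ∏ b ∈ univ.erase a, q⁻¹ * ((t a - t b * q ^ 2) / (t a - t b)) :=
            Finset.prod_congr rfl (fun b _ => by rw [hq2q (t a) (t b), mul_div_assoc])
        _ = (∏ _b ∈ univ.erase a, q⁻¹) *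
              ∏ b ∈ univ.erase a, (t a - t b * q ^ 2) / (t a - t b) := Finset.prod_mul_distrib
        _ = _ := by rw [Finset.prod_const, Finset.prod_div_distrib]
    have e2 : ∏ b ∈ univ.erase a, (t a * q - t b * q⁻¹) / (t a - t b)
        = q⁻¹ ^ (univ.erase a).card *
            ((∏ b ∈ univ.erase a, (t a * q ^ 2 - t b)) / ∏ b ∈ univ.erase a, (t a - t b)) := by
      calc ∏ b ∈ univ.erase a, (t a * q - t b * q⁻¹) / (t a - t b)
          = ∏ b ∈ univ.erase a, q⁻¹ * ((t a * q ^ 2 - t b) / (t a - t b)) :=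
            Finset.prod_congr rfl (fun b _ => by rw [hq2q' (t a) (t b), mul_div_assoc])
        _ = (∏ _b ∈ univ.erase a, q⁻¹) *
              ∏ b ∈ univ.erase a, (t a * q ^ 2 - t b) / (t a - t b) := Finset.prod_mul_distrib
        _ = _ := by rw [Finset.prod_const, Finset.prod_div_distrib]
    rw [e1, e2]
    linear_combination (t a * (q - q⁻¹) / (u - t a) * q⁻¹ ^ (univ.erase a).card /
      ∏ b ∈ univ.erase a, (t a - t b)) * hBethe a
  have h0 : (∑ a : Fin k,
        (t a * (q - q⁻¹) / (u - t a) * 𝒜 (t a)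
            * ∏ b ∈ univ.erase a, (t a * q⁻¹ - t b * q) / (t a - t b)) •
          (B u) (((univ.erase a).noncommProd (fun b => B (t b))
            (fun x _ y _ _ => hBB (t x) (t y))) w))
      + (∑ a : Fin k,
        (κ * (t a * (q⁻¹ - q) / (u - t a) * 𝒟 (t a)
            * ∏ b ∈ univ.erase a, (t a * q - t b * q⁻¹) / (t a - t b))) •
          (B u) (((univ.erase a).noncommProd (fun b => B (t b))
            (fun x _ y _ _ => hBB (t x) (t y))) w)) = 0 := by
    rw [← Finset.sum_add_distrib]
    exact Finset.sum_eq_zero fun a _ => by rw [← add_smul, hz a, zero_smul]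
  rw [eq_neg_of_add_eq_zero_left h0]
  module
end

section
/- Let 𝒜(u) = ∏_{i=1}^{N} (u q^{ℓ_i} − z_i q^{−ℓ_i}) and 𝒟(u) = ∏_{i=1}^{N} (u q^{−ℓ_i} − z_i q^{ℓ_i}) with all z_i ≠ 0 and 2ℓ_i positive integers, and assume q^{2ℓ_i} z_i ≠ q^{−2ℓ_j} z_j for all i, j. If t_1,…,t_k is a solution of the Bethe equations 𝒜(t_a) ∏_{b≠a}(t_a − t_b q²) = κ 𝒟(t_a) ∏_{b≠a}(t_a q² − t_b) which is admissible (i.e. t_a ≠ 0 and t_a ≠ q² t_b for all a, b), then no t_a equals any of the points q^{2ℓ_i} z_i or q^{−2ℓ_i} z_i. -/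
open Finset

theorem admissible_solution_avoids_special_points
    (γ : ℂ) (N : ℕ) (L : Fin N → ℕ) (hL : ∀ i, 0 < L i)
    (z : Fin N → ℂ) (hz : ∀ i, z i ≠ 0) (κ : ℂ) (hκ : κ ≠ 0)
    (qpow : ℂ → ℂ) (hqpow : ∀ x : ℂ, qpow x = Complex.exp (Complex.I * γ * x))
    (q : ℂ) (hq : q = qpow 1) (hq2 : q ^ 2 ≠ 1)
    (hqroot : ∀ i : Fin N, ∀ r : ℕ, 1 ≤ r → r ≤ L i → q ^ (2 * r) ≠ 1)
    (hsep : ∀ i j, qpow (L i) * z i ≠ qpow (-(L j : ℂ)) * z j)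
    (𝒜 𝒟 : ℂ → ℂ)
    (h𝒜 : ∀ u : ℂ, 𝒜 u
      = ∏ i, (u * qpow ((L i : ℂ) / 2) - z i * qpow (-((L i : ℂ) / 2))))
    (h𝒟 : ∀ u : ℂ, 𝒟 u
      = ∏ i, (u * qpow (-((L i : ℂ) / 2)) - z i * qpow ((L i : ℂ) / 2)))
    (k : ℕ) (t : Fin k → ℂ)
    (hBethe : ∀ a, 𝒜 (t a) * ∏ b ∈ univ.erase a, (t a - t b * q ^ 2)
        = κ * 𝒟 (t a) * ∏ b ∈ univ.erase a, (t a * q ^ 2 - t b))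
    (hadm0 : ∀ a, t a ≠ 0) (hadm : ∀ a b, t a ≠ q ^ 2 * t b) :
    ∀ a i, t a ≠ qpow (L i) * z i ∧ t a ≠ qpow (-(L i : ℂ)) * z i := by
  have hadd : ∀ x y : ℂ, qpow (x + y) = qpow x * qpow y := fun x y => by
    simp only [hqpow, mul_add, Complex.exp_add]
  intro a i
  constructor
  · intro heq
    have key := hBethe a
    have hD : 𝒟 (t a) = 0 := by
      rw [h𝒟]
      refine Finset.prod_eq_zero (Finset.mem_univ i) ?_
      have h1 : qpow ((L i : ℂ)) * qpow (-((L i : ℂ) / 2)) = qpow ((L i : ℂ) / 2) := by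
        rw [← hadd]; congr 1; ring
      rw [heq]
      linear_combination z i * h1
    have hA : 𝒜 (t a) ≠ 0 := by
      rw [h𝒜, Finset.prod_ne_zero_iff]
      intro j _ h0
      apply hsep i j
      have h2 : qpow ((L j : ℂ) / 2) * qpow (-((L j : ℂ) / 2)) = 1 := by
        rw [← hadd]; norm_num [hqpow]
      have h3 : qpow (-((L j : ℂ) / 2)) * qpow (-((L j : ℂ) / 2)) = qpow (-(L j : ℂ)) := by
        rw [← hadd]; congr 1; ring
      rw [heq] at h0
      linear_combination qpow (-((L j : ℂ) / 2)) * h0 -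
        qpow ((L i : ℂ)) * z i * h2 + z j * h3
    have h4 : 𝒜 (t a) * ∏ b ∈ univ.erase a, (t a - t b * q ^ 2) = 0 := by
      rw [key, hD]; ring
    have h5 := (mul_eq_zero.mp h4).resolve_left hA
    obtain ⟨b, hb, h6⟩ := Finset.prod_eq_zero_iff.mp h5
    exact hadm a b (by linear_combination h6)
  · intro heq
    have key := hBethe a
    have hA : 𝒜 (t a) = 0 := by
      rw [h𝒜]
      refine Finset.prod_eq_zero (Finset.mem_univ i) ?_
      have h1 : qpow (-(L i : ℂ)) * qpow ((L i : ℂ) / 2) = qpow (-((L i : ℂ) / 2)) := by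
        rw [← hadd]; congr 1; ring
      rw [heq]
      linear_combination z i * h1
    have hD : 𝒟 (t a) ≠ 0 := by
      rw [h𝒟, Finset.prod_ne_zero_iff]
      intro j _ h0
      apply hsep j i
      have h2 : qpow (-((L j : ℂ) / 2)) * qpow ((L j : ℂ) / 2) = 1 := by
        rw [← hadd]; norm_num [hqpow]
      have h3 : qpow ((L j : ℂ) / 2) * qpow ((L j : ℂ) / 2) = qpow ((L j : ℂ)) := by
        rw [← hadd]; congr 1; ring
      rw [heq] at h0
      linear_combination -(qpow ((L j : ℂ) / 2) * h0) +
        qpow (-(L i : ℂ)) * z i * h2 - z j * h3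
    have h4 : (κ * 𝒟 (t a)) * ∏ b ∈ univ.erase a, (t a * q ^ 2 - t b) = 0 := by
      rw [mul_assoc]; linear_combination -key + (∏ b ∈ univ.erase a, (t a - t b * q ^ 2)) * hA
    have h5 := (mul_eq_zero.mp h4).resolve_left (mul_ne_zero hκ hD)
    obtain ⟨b, hb, h6⟩ := Finset.prod_eq_zero_iff.mp h5
    exact hadm b a (by linear_combination -h6)
end
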